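/- For every ξ ∈ 𝔽_p^× with Teichmüller lift [ξ] ∈ ℤ_p, the Artin–Hasse exponential satisfies E_p([ξ]·x) = E_p(x)^{[ξ]}, where the right side means the binomial power series (1+(E_p(x)−1))^{[ξ]} = ∑_{n≥0} C([ξ],n)(E_p(x)−1)^n. -/

import Mathlib

open PowerSeries

/-- The series `g(x) = ∑_{k≥0} x^{p^k}/p^k`. -/
noncomputable def AHlog (p : ℕ) (K : Type*) [Field K] : PowerSeries K :=
  PowerSeries.mk fun m =>
    letI := Classical.propDecidable
    if h : ∃ k : ℕ, m = p ^ k then ((p : K) ^ h.choose)⁻¹ else 0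

/-- Composition `f ∘ g` of power series (intended for `g` with zero constant term). -/
noncomputable def compPS {K : Type*} [CommRing K] (f g : PowerSeries K) : PowerSeries K :=
  PowerSeries.mk fun m => ∑ n ∈ Finset.range (m + 1),
    (PowerSeries.coeff (R := K) n f) * PowerSeries.coeff (R := K) m (g ^ n)

/-- The Artin–Hasse exponential `E_p(x) = exp(∑ x^{p^k}/p^k)`. -/
noncomputable def ArtinHasse (p : ℕ) (K : Type*) [Field K] [Algebra ℚ K] : PowerSeries K :=
  compPS (PowerSeries.exp K) (AHlog p K)

/-- Binomial coefficient `C(c, n) = c(c-1)⋯(c-n+1)/n!` for `c` in a field of characteristic 0. -/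
noncomputable def binomC {K : Type*} [Field K] (c : K) (n : ℕ) : K :=
  (∏ i ∈ Finset.range n, (c - i)) / (n.factorial : K)

/-- The binomial power `f^c = ∑_{n≥0} C(c,n) (f-1)^n` of a power series with constant term 1. -/
noncomputable def bpow {K : Type*} [Field K] (f : PowerSeries K) (c : K) : PowerSeries K :=
  PowerSeries.mk fun m => ∑ n ∈ Finset.range (m + 1),
    binomC c n * PowerSeries.coeff (R := K) m ((f - 1) ^ n)

open Finset

section Aux
variable {K : Type*} [Field K] [CharZero K]

lemma coeff_pow_zero_of_lt {w : PowerSeries K} (hw : constantCoeff (R := K) w = 0) :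
    ∀ (n : ℕ) {m : ℕ}, m < n → coeff (R := K) m (w ^ n) = 0 := by
  intro n
  induction n with
  | zero => intro m h; omega
  | succ n ih =>
    intro m h
    rw [pow_succ, coeff_mul]
    apply Finset.sum_eq_zero
    rintro ⟨i, j⟩ hij
    rw [Finset.HasAntidiagonal.mem_antidiagonal] at hij
    by_cases hi : i < n
    · rw [ih hi, zero_mul]
    · have hj : j = 0 := by omega
      subst hj
      rw [coeff_zero_eq_constantCoeff, hw, mul_zero]

lemma coeff_mul_pow_zero {w : PowerSeries K} (hw : constantCoeff (R := K) w = 0)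
    (v : PowerSeries K) {m n : ℕ} (h : m < n) :
    coeff (R := K) m (v * w ^ n) = 0 := by
  rw [coeff_mul]
  apply Finset.sum_eq_zero
  rintro ⟨i, j⟩ hij
  rw [Finset.HasAntidiagonal.mem_antidiagonal] at hij
  rw [coeff_pow_zero_of_lt hw n (by omega), mul_zero]

lemma swap_lemma (v : PowerSeries K) {w : PowerSeries K} (hw : constantCoeff (R := K) w = 0)
    (b : ℕ → K) (m : ℕ) :
    coeff (R := K) m (v * PowerSeries.mk fun j => ∑ n ∈ range (j + 1), b n * coeff (R := K) j (w ^ n))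
      = ∑ n ∈ range (m + 1), b n * coeff (R := K) m (v * w ^ n) := by
  rw [coeff_mul]
  simp only [coeff_mk]
  have step : ∀ q ∈ antidiagonal m,
      coeff (R := K) q.1 v * ∑ n ∈ range (q.2 + 1), b n * coeff (R := K) q.2 (w ^ n)
        = ∑ n ∈ range (m + 1), coeff (R := K) q.1 v * (b n * coeff (R := K) q.2 (w ^ n)) := by
    rintro ⟨i, j⟩ hij
    rw [Finset.HasAntidiagonal.mem_antidiagonal] at hij
    rw [Finset.mul_sum]
    apply Finset.sum_subset
    · exact Finset.range_subset_range.2 (by omega)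
    · intro n _ hn
      rw [Finset.mem_range, not_lt] at hn
      rw [coeff_pow_zero_of_lt hw n (by omega), mul_zero, mul_zero]
  rw [Finset.sum_congr rfl step, Finset.sum_comm]
  apply Finset.sum_congr rfl
  intro n _
  rw [coeff_mul, Finset.mul_sum]
  apply Finset.sum_congr rfl
  intro q _
  ring

lemma ode_uniq {u F G : PowerSeries K} (h0 : coeff (R := K) 0 F = coeff (R := K) 0 G)
    (hF : d⁄dX K F = u * F) (hG : d⁄dX K G = u * G) : F = G := by
  ext m
  induction m using Nat.strong_induction_on with
  | _ m ih =>
    match m with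
    | 0 => exact h0
    | m + 1 =>
      have hFc := congrArg (coeff (R := K) m) hF
      have hGc := congrArg (coeff (R := K) m) hG
      rw [coeff_derivative, coeff_mul] at hFc hGc
      have hsum : ∑ q ∈ antidiagonal m, coeff (R := K) q.1 u * coeff (R := K) q.2 F
          = ∑ q ∈ antidiagonal m, coeff (R := K) q.1 u * coeff (R := K) q.2 G := by
        apply Finset.sum_congr rfl
        rintro ⟨i, j⟩ hij
        rw [Finset.HasAntidiagonal.mem_antidiagonal] at hij
        rw [ih j (by omega)]
      have key := hFc.trans (hsum.trans hGc.symm)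
      exact mul_right_cancel₀ (by exact_mod_cast Nat.succ_ne_zero m) key

lemma key_ode {w u₀ u₁ u : PowerSeries K} (b : ℕ → K) (c : K)
    (hw : constantCoeff (R := K) w = 0)
    (hd : d⁄dX K w = u₁ * w + u₀)
    (hcomb : ∀ n : ℕ, C (R := K) ((n : K) * b n) * u₁ + C (R := K) (((n : K) + 1) * b (n + 1)) * u₀
        = C (R := K) (c * b n) * u) :
    d⁄dX K (PowerSeries.mk fun m => ∑ n ∈ range (m + 1), b n * coeff (R := K) m (w ^ n))
      = (C (R := K) c * u) * (PowerSeries.mk fun m => ∑ n ∈ range (m + 1), b n * coeff (R := K) m (w ^ n)) := by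
  ext m
  rw [coeff_derivative, coeff_mk, mul_assoc, coeff_C_mul,
    swap_lemma u hw b m]
  -- LHS : (∑ n ∈ range (m+2), b n * coeff (m+1) (w^n)) * (m+1)
  rw [Finset.sum_mul]
  have e1 : ∀ n : ℕ, b n * coeff (R := K) (m + 1) (w ^ n) * ((m : K) + 1)
      = b n * coeff (R := K) m (d⁄dX K (w ^ n)) := by
    intro n
    rw [coeff_derivative]
    ring
  rw [Finset.sum_congr rfl fun n _ => e1 n]
  have e2 : ∀ k : ℕ, b (k + 1) * coeff (R := K) m (d⁄dX K (w ^ (k + 1)))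
      = ((k : K) + 1) * b (k + 1) * (coeff (R := K) m (u₁ * w ^ (k + 1)) + coeff (R := K) m (u₀ * w ^ k)) := by
    intro k
    have hw' : w ^ k * (u₁ * w + u₀) = u₁ * w ^ (k + 1) + u₀ * w ^ k := by ring
    rw [Derivation.leibniz_pow, hd, Nat.add_sub_cancel, smul_eq_mul, hw', map_nsmul,
      nsmul_eq_mul, map_add]
    push_cast
    ring
  rw [Finset.sum_range_succ']
  simp only [e2]
  rw [pow_zero, Derivation.map_one_eq_zero, map_zero, mul_zero, add_zero]
  have h1 : ∑ k ∈ range (m + 1), ((k : K) + 1) * b (k + 1) * coeff (R := K) m (u₁ * w ^ (k + 1))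
      = ∑ n ∈ range (m + 1), (n : K) * b n * coeff (R := K) m (u₁ * w ^ n) := by
    have h2 := Finset.sum_range_succ' (fun n => (n : K) * b n * coeff (R := K) m (u₁ * w ^ n)) (m + 1)
    rw [Finset.sum_range_succ (fun n => (n : K) * b n * coeff (R := K) m (u₁ * w ^ n)) (m + 1)] at h2
    simp only [Nat.cast_zero, zero_mul, add_zero, Nat.cast_add, Nat.cast_one] at h2
    rw [coeff_mul_pow_zero hw u₁ (Nat.lt_succ_self m), mul_zero, add_zero] at h2
    exact h2.symm
  have split : ∑ k ∈ range (m + 1),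
      ((k : K) + 1) * b (k + 1) * (coeff (R := K) m (u₁ * w ^ (k + 1)) + coeff (R := K) m (u₀ * w ^ k))
      = ∑ n ∈ range (m + 1), ((n : K) * b n * coeff (R := K) m (u₁ * w ^ n)
          + ((n : K) + 1) * b (n + 1) * coeff (R := K) m (u₀ * w ^ n)) := by
    simp only [mul_add]
    rw [Finset.sum_add_distrib, Finset.sum_add_distrib, h1]
  rw [split, Finset.mul_sum]
  apply Finset.sum_congr rfl
  intro n _
  have h := congrArg (fun f => coeff (R := K) m (f * w ^ n)) (hcomb n)
  simp only [add_mul, map_add, coeff_C_mul, mul_assoc] at h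
  linear_combination h

end Aux

section Aux2
variable {K : Type*} [Field K] [CharZero K]

lemma binomC_succ (c : K) (n : ℕ) :
    ((n : K) + 1) * binomC c (n + 1) = (c - n) * binomC c n := by
  unfold binomC
  rw [Finset.prod_range_succ, Nat.factorial_succ]
  have h1 : (n.factorial : K) ≠ 0 := Nat.cast_ne_zero.2 n.factorial_ne_zero
  have h2 : ((n : K) + 1) ≠ 0 := by exact_mod_cast Nat.succ_ne_zero n
  push_cast
  field_simp

lemma derivative_rescale (c : K) (f : PowerSeries K) :
    d⁄dX K (rescale c f) = c • rescale c (d⁄dX K f) := by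
  ext m
  rw [coeff_derivative, coeff_rescale, map_smul, smul_eq_mul, coeff_rescale, coeff_derivative,
    pow_succ]
  ring

end Aux2


/-- For `ξ ∈ 𝔽_p^×` with Teichmüller lift `t ∈ ℤ_p` (the unique `t` with `t^p = t` reducing to
`ξ`), we have `E_p(t·x) = E_p(x)^t`, the latter being the binomial power series. -/
theorem artinHasse_rescale_teichmuller (p : ℕ) [Fact p.Prime] (ξ : (ZMod p)ˣ) (t : ℤ_[p])
    (ht : t ^ p = t) (hred : PadicInt.toZMod t = (ξ : ZMod p)) :
    PowerSeries.rescale (t : ℚ_[p]) (ArtinHasse p ℚ_[p])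
      = bpow (ArtinHasse p ℚ_[p]) (t : ℚ_[p]) := by
  have hp : p.Prime := Fact.out
  set K := ℚ_[p]
  set τ : K := (t : K) with hτ
  -- t is a (p^k - 1)-st root of unity
  have htk : ∀ k : ℕ, t ^ (p ^ k) = t := by
    intro k
    induction k with
    | zero => simp
    | succ k ih => rw [pow_succ, pow_mul, ih, ht]
  have htne : τ ≠ 0 := by
    intro h
    have h0 : t = 0 := (PadicInt.coe_eq_zero (x := t)).1 (by rw [hτ] at h; exact h)
    rw [h0, map_zero] at hred
    exact ξ.ne_zero hred.symm
  have hroot : ∀ k : ℕ, τ ^ (p ^ k - 1) = 1 := by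
    intro k
    have hpk : 1 ≤ p ^ k := Nat.one_le_pow _ _ hp.pos
    have h1 : τ ^ (p ^ k) = τ := by exact_mod_cast congrArg (PadicInt.Coe.ringHom) (htk k)
    have h2 : τ ^ (p ^ k - 1) * τ = 1 * τ := by
      rw [one_mul, ← pow_succ, Nat.sub_add_cancel hpk, h1]
    exact mul_right_cancel₀ htne h2
  set g : PowerSeries K := AHlog p K with hg
  set u : PowerSeries K := d⁄dX K g with hu
  have hg0 : constantCoeff (R := K) g = 0 := by
    rw [← coeff_zero_eq_constantCoeff_apply, hg]
    simp only [AHlog, coeff_mk]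
    rw [dif_neg]
    rintro ⟨k, hk⟩
    exact (pow_pos hp.pos k).ne' hk.symm
  set A : PowerSeries K := ArtinHasse p K with hA
  have hAmk : A = PowerSeries.mk fun m => ∑ n ∈ range (m + 1),
      (fun n => coeff (R := K) n (exp K)) n * coeff (R := K) m (g ^ n) := rfl
  have hA0 : constantCoeff (R := K) A = 1 := by
    rw [← coeff_zero_eq_constantCoeff_apply, hAmk, coeff_mk]
    simp [coeff_exp, Nat.factorial]
  -- ODE for A : A' = u * A
  have hAode : d⁄dX K A = u * A := by
    have := key_ode (K := K) (w := g) (u₀ := u) (u₁ := 0) (u := u)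
      (fun n => coeff (R := K) n (exp K)) 1 hg0 (by rw [zero_mul, zero_add])
      (fun n => by
        rw [mul_zero, zero_add, one_mul]
        congr 1
        simp only [coeff_exp]
        have hcast : ((n : K) + 1) = algebraMap ℚ K ((n : ℚ) + 1) := by
          push_cast
          simp
        rw [hcast, ← map_mul]
        have key : ((n : ℚ) + 1) * (1 / ((n + 1).factorial : ℚ)) = 1 / (n.factorial : ℚ) := by
          have h2 : ((n : ℚ) + 1) ≠ 0 := by exact_mod_cast Nat.succ_ne_zero n
          rw [Nat.factorial_succ, Nat.cast_mul, Nat.cast_add, Nat.cast_one, one_div, one_div,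
            mul_inv, ← mul_assoc, mul_inv_cancel₀ h2, one_mul]
        rw [key])
    rw [hAmk]
    rw [this, map_one, one_mul]
  -- ODE for the rescaled side
  have hrescale_u : rescale τ u = u := by
    ext m
    rw [coeff_rescale, hu, coeff_derivative, hg]
    simp only [AHlog, coeff_mk]
    split_ifs with h
    · have hk := h.choose_spec
      have hm : m = p ^ h.choose - 1 := by omega
      have hτm : τ ^ m = 1 := by rw [hm]; exact hroot _
      rw [hτm]
      ring
    · ring
  have hFode : d⁄dX K (rescale τ A) = (C (R := K) τ * u) * rescale τ A := by
    rw [derivative_rescale, hAode, map_mul, hrescale_u, smul_eq_C_mul]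
    ring
  -- ODE for the bpow side
  have hw0 : constantCoeff (R := K) (A - 1) = 0 := by
    rw [map_sub, hA0, map_one, sub_self]
  have hGode : d⁄dX K (bpow A τ) = (C (R := K) τ * u) * bpow A τ := by
    have := key_ode (K := K) (w := A - 1) (u₀ := u) (u₁ := u) (u := u)
      (binomC τ) τ hw0
      (by rw [map_sub, Derivation.map_one_eq_zero, sub_zero, hAode]; ring)
      (fun n => by
        rw [← add_mul, ← map_add]
        congr 2
        have h := binomC_succ τ n
        linear_combination h)
    rw [show bpow A τ = PowerSeries.mk fun m => ∑ n ∈ range (m + 1),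
      binomC τ n * coeff (R := K) m ((A - 1) ^ n) from rfl]
    exact this
  -- constant coefficients agree
  have h0 : coeff (R := K) 0 (rescale τ A) = coeff (R := K) 0 (bpow A τ) := by
    rw [coeff_rescale, pow_zero, one_mul, coeff_zero_eq_constantCoeff_apply, hA0]
    rw [show bpow A τ = PowerSeries.mk fun m => ∑ n ∈ range (m + 1),
      binomC τ n * coeff (R := K) m ((A - 1) ^ n) from rfl, coeff_mk]
    simp [binomC]
  exact ode_uniq h0 hFode hGode
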